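/- arXiv:2312.00345 — 2 statements merged into one kernel-verified Lean document; each statement's English description precedes it below -/
import Mathlib

section
/- Let A be a totally unimodular m×n matrix and b ∈ ℤ^m. Then every vertex (extreme point) of the polyhedron P = { x ∈ ℝ^n : A x ≤ b } is an integer vector. -/
open Matrix


/-- If A is totally unimodular and b is an integer vector, then every vertex (extreme point)
of the polyhedron P = {x : A x ≤ b} is an integer vector.  A vertex is a point of P that is
not the midpoint of two distinct points of P. -/
theorem tu_polyhedron_vertex_integral {m n : ℕ} (A : Matrix (Fin m) (Fin n) ℝ)
    (hA : A.IsTotallyUnimodular) (b : Fin m → ℤ)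
    (P : Set (Fin n → ℝ))
    (hP : P = {x | ∀ i, (∑ j, A i j * x j) ≤ (b i : ℝ)})
    (x : Fin n → ℝ) (hxP : x ∈ P)
    (hvertex : ∀ y ∈ P, ∀ z ∈ P, x = (1/2 : ℝ) • y + (1/2 : ℝ) • z → y = z) :
    ∀ j, ∃ k : ℤ, x j = (k : ℝ) := by
  classical
  subst hP
  have hxP' : ∀ i, (∑ j, A i j * x j) ≤ (b i : ℝ) := hxP
  set T : Fin m → Prop := fun i => (∑ j, A i j * x j) = (b i : ℝ) with hT
  -- Step 1: any direction orthogonal to all tight rows is zero.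
  have key : ∀ d : Fin n → ℝ, (∀ i, T i → ∑ j, A i j * d j = 0) → d = 0 := by
    intro d hd
    by_contra hd0
    have hslack : ∀ i, ¬ T i → (∑ j, A i j * x j) < (b i : ℝ) := fun i hi =>
      lt_of_le_of_ne (hxP' i) hi
    set F : Finset (Fin m) := Finset.univ.filter (fun i => ¬ T i) with hF
    set f : Fin m → ℝ := fun i => ((b i : ℝ) - ∑ j, A i j * x j) / (|∑ j, A i j * d j| + 1)
      with hf
    set ε : ℝ := if hFne : F.Nonempty then min 1 (F.inf' hFne f) else 1 with hε
    have hεpos : 0 < ε := by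
      rw [hε]
      split_ifs with hFne
      · apply lt_min one_pos
        rw [Finset.lt_inf'_iff]
        intro i hi
        have hi' : ¬ T i := by simpa [hF] using hi
        have := hslack i hi'
        apply div_pos (by linarith) (by positivity)
      · exact one_pos
    have hεle : ∀ i, ¬ T i → ε * |∑ j, A i j * d j| ≤ (b i : ℝ) - ∑ j, A i j * x j := by
      intro i hi
      have hiF : i ∈ F := by simp [hF, hi]
      have hFne : F.Nonempty := ⟨i, hiF⟩
      have h1 : ε ≤ f i := by
        rw [hε, dif_pos hFne]
        exact (min_le_right _ _).trans (Finset.inf'_le f hiF)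
      have h2 : (0:ℝ) < |∑ j, A i j * d j| + 1 := by positivity
      have habs : (0:ℝ) ≤ |∑ j, A i j * d j| := abs_nonneg _
      calc ε * |∑ j, A i j * d j| ≤ ε * (|∑ j, A i j * d j| + 1) := by nlinarith
        _ ≤ f i * (|∑ j, A i j * d j| + 1) := by nlinarith
        _ = (b i : ℝ) - ∑ j, A i j * x j := by
            rw [hf]; field_simp
    have hmem : ∀ s : ℝ, |s| = 1 →
        (fun j => x j + s * ε * d j) ∈ {x | ∀ i, (∑ j, A i j * x j) ≤ (b i : ℝ)} := by
      intro s hs i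
      have expand : ∑ j, A i j * (x j + s * ε * d j)
          = (∑ j, A i j * x j) + s * ε * (∑ j, A i j * d j) := by
        rw [Finset.mul_sum, ← Finset.sum_add_distrib]
        exact Finset.sum_congr rfl fun j _ => by ring
      show ∑ j, A i j * (x j + s * ε * d j) ≤ (b i : ℝ)
      by_cases hi : T i
      · rw [expand, hd i hi, mul_zero, add_zero, hi]
      · have h1 := hεle i hi
        have h2 : s * ε * (∑ j, A i j * d j) ≤ ε * |∑ j, A i j * d j| := by
          calc s * ε * (∑ j, A i j * d j) ≤ |s * ε * (∑ j, A i j * d j)| := le_abs_self _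
            _ = |s| * |ε| * |∑ j, A i j * d j| := by rw [abs_mul, abs_mul]
            _ = ε * |∑ j, A i j * d j| := by rw [hs, abs_of_pos hεpos, one_mul]
        rw [expand]; linarith
    have hy := hmem 1 (by norm_num)
    have hz := hmem (-1) (by norm_num)
    have hyz := hvertex _ hy _ hz (by funext j; simp; ring)
    apply hd0
    funext j
    have := congrFun hyz j
    have : ε * d j = -(ε * d j) := by linarith [this]
    have : ε * d j = 0 := by linarith
    simp only [Pi.zero_apply]
    rcases mul_eq_zero.mp this with h | h
    · exact absurd h (ne_of_gt hεpos)
    · exact h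
  -- Step 2: tight rows span everything
  set r : Fin m → EuclideanSpace ℝ (Fin n) := fun i => WithLp.toLp 2 (fun j => A i j) with hr
  have hspan : Submodule.span ℝ (r '' {i | T i}) = ⊤ := by
    by_contra hW
    have hWo : (Submodule.span ℝ (r '' {i | T i}))ᗮ ≠ ⊥ := fun h =>
      hW (Submodule.orthogonal_eq_bot_iff.mp h)
    obtain ⟨d, hdW, hd0⟩ := Submodule.exists_mem_ne_zero_of_ne_bot hWo
    have hd : ∀ i, T i → ∑ j, A i j * (d j) = 0 := by
      intro i hi
      have h0 := (Submodule.mem_orthogonal _ _).mp hdW (r i)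
        (Submodule.subset_span ⟨i, hi, rfl⟩)
      rw [PiLp.inner_apply] at h0
      simpa [hr, mul_comm] using h0
    exact hd0 (by have := key (fun j => d j) hd; ext j; exact congrFun this j)
  -- Step 3: pick a basis among the tight rows
  obtain ⟨s, hsub, hspan2, hli⟩ := exists_linearIndependent ℝ (r '' {i | T i})
  rw [hspan] at hspan2
  have hsfin : s.Finite := (((Set.toFinite {i | T i}).image r).subset hsub)
  have : Fintype ↥s := hsfin.fintype
  have hbasis : Module.Basis ↥s ℝ (EuclideanSpace ℝ (Fin n)) := Module.Basis.mk hli (by rw [Subtype.range_coe, hspan2])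
  have hcard : Fintype.card ↥s = n := by
    have h1 := Module.finrank_eq_card_basis hbasis
    rw [finrank_euclideanSpace_fin] at h1
    omega
  set e : Fin n ≃ ↥s := (Fintype.equivFinOfCardEq hcard).symm with he
  have hchoose : ∀ k : Fin n, ∃ i, T i ∧ r i = ((e k : ↥s) : EuclideanSpace ℝ (Fin n)) := by
    intro k
    obtain ⟨i, hi, hri⟩ := hsub (e k).2
    exact ⟨i, hi, hri⟩
  choose g hgT hgr using hchoose
  set B : Matrix (Fin n) (Fin n) ℝ := A.submatrix g id with hB
  have hrowsB : (fun k => B k) = fun k => (((e k : ↥s) : EuclideanSpace ℝ (Fin n)) : Fin n → ℝ) := by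
    funext k
    rw [← hgr k]
    rfl
  have hliB : LinearIndependent ℝ (fun k => B k) := by
    have h1 : LinearIndependent ℝ (fun k : Fin n => ((e k : ↥s) : EuclideanSpace ℝ (Fin n))) :=
      hli.comp e e.injective
    have h2 := h1.map' (WithLp.linearEquiv 2 ℝ (Fin n → ℝ)).toLinearMap
      (WithLp.linearEquiv 2 ℝ (Fin n → ℝ)).ker
    have h3 : (fun k => B k) = (⇑((WithLp.linearEquiv 2 ℝ (Fin n → ℝ)).toLinearMap) ∘
        fun k : Fin n => ((e k : ↥s) : EuclideanSpace ℝ (Fin n))) := by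
      rw [hrowsB]
      rfl
    rw [h3]
    exact h2
  have hU : IsUnit B := Matrix.linearIndependent_rows_iff_isUnit.mp hliB
  have hdetU : IsUnit B.det := (Matrix.isUnit_iff_isUnit_det B).mp hU
  have hdet0 : B.det ≠ 0 := hdetU.ne_zero
  have hginj : Function.Injective g := by
    intro k k' h
    have hco : ((e k : ↥s) : EuclideanSpace ℝ (Fin n)) = ((e k' : ↥s) : EuclideanSpace ℝ (Fin n)) := by
      rw [← hgr k, ← hgr k', h]
    exact e.injective (Subtype.coe_injective hco)
  obtain ⟨σ, hσ⟩ := hA n g id hginj Function.injective_id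
  have hσ' : (σ : ℝ) = B.det := hσ
  have hδ : B.det = 1 ∨ B.det = -1 := by
    rcases σ with _ | _ | _
    · simp at hσ'; exact absurd hσ'.symm hdet0
    · right; rw [← hσ']; simp
    · left; rw [← hσ']; simp
  have hδδ : B.det * B.det = 1 := by rcases hδ with h | h <;> rw [h] <;> norm_num
  -- integer entries
  have hint : ∀ k j, ∃ z : ℤ, B k j = (z : ℝ) := by
    intro k j
    obtain ⟨τ, hτ⟩ := hA.apply (g k) j
    exact ⟨(τ : ℤ), by rw [show B k j = A (g k) j from rfl, ← hτ]; cases τ <;> simp⟩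
  obtain ⟨B', hB'⟩ : ∃ B' : Matrix (Fin n) (Fin n) ℤ, ∀ k j, B k j = ((B' k j : ℤ) : ℝ) :=
    ⟨fun k j => Classical.choose (hint k j), fun k j => Classical.choose_spec (hint k j)⟩
  have hBmap : B = (B'.map (Int.cast : ℤ → ℝ)) := by
    ext k j; exact hB' k j
  set c : Fin n → ℝ := fun k => (b (g k) : ℝ) with hc
  have hBx : B *ᵥ x = c := by
    funext k
    show ∑ j, B k j * x j = (b (g k) : ℝ)
    exact hgT k
  have hcr : Matrix.cramer B c = B.det • x := by
    have h1 : B *ᵥ (Matrix.cramer B c) = B *ᵥ (B.det • x) := by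
      rw [Matrix.mulVec_cramer, ← hBx, Matrix.mulVec_smul]
    exact Matrix.mulVec_injective_iff_isUnit.mpr hU h1
  intro j
  have hcrj : (B.updateCol j c).det = B.det * x j := by
    have := congrFun hcr j
    rwa [Matrix.cramer_apply] at this
  set C' : Matrix (Fin n) (Fin n) ℤ := B'.updateCol j (fun k => b (g k)) with hC'
  have hCdet : (B.updateCol j c).det = ((C'.det : ℤ) : ℝ) := by
    have h1 : B.updateCol j c = C'.map (Int.cast : ℤ → ℝ) := by
      rw [hC', Matrix.map_updateCol, ← hBmap]
      rfl
    rw [h1]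
    exact (RingHom.map_det (Int.castRingHom ℝ) C').symm
  have hxj : x j = B.det * ((C'.det : ℤ) : ℝ) := by
    have h1 : B.det * x j = ((C'.det : ℤ) : ℝ) := by rw [← hcrj, hCdet]
    calc x j = (B.det * B.det) * x j := by rw [hδδ, one_mul]
      _ = B.det * ((C'.det : ℤ) : ℝ) := by rw [mul_assoc, h1]
  rcases hδ with h | h
  · exact ⟨C'.det, by rw [hxj, h, one_mul]⟩
  · exact ⟨-C'.det, by rw [hxj, h]; push_cast; ring⟩
end

section
/- Let A be a totally unimodular m×n matrix, b ∈ ℤ^m, and c ∈ ℤ^n. If the linear program max{ cᵀx : A x ≤ b } has a finite optimum, then it has an integer optimal solution, and so does the dual min{ yᵀb : y ≥ 0, Aᵀ y = c }. -/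
open Matrix Finset

private lemma sum_ite_mul {ι : Type*} [Fintype ι] [DecidableEq ι] (i0 : ι) (c : ℝ) (v : ι → ℝ) :
    (∑ i, (if i = i0 then c else 0) * v i) = c * v i0 := by
  have h : ∀ i : ι, (if i = i0 then c else 0) * v i = if i = i0 then c * v i0 else 0 := by
    intro i; split_ifs with h <;> simp [h]
  simp [h, Finset.sum_ite_eq']

private theorem farkas : ∀ (n : ℕ) {ι : Type} [Fintype ι] (A : ι → Fin n → ℝ) (b : ι → ℝ),
    (¬ ∃ x : Fin n → ℝ, ∀ i, (∑ j, A i j * x j) ≤ b i) →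
    ∃ y : ι → ℝ, (∀ i, 0 ≤ y i) ∧ (∀ j, ∑ i, y i * A i j = 0) ∧ ∑ i, y i * b i < 0 := by
  intro n
  induction n with
  | zero =>
    intro ι _ A b hinf
    classical
    push_neg at hinf
    obtain ⟨i0, hi0⟩ := hinf (fun _ => 0)
    simp only [Finset.univ_eq_empty, Finset.sum_empty] at hi0
    refine ⟨fun i => if i = i0 then 1 else 0, fun i => by positivity, fun j => j.elim0, ?_⟩
    rw [sum_ite_mul]
    linarith
  | succ n ih =>
    intro ι _ A b hinf
    classical
    set a : ι → ℝ := fun i => A i (Fin.last n) with ha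
    let A' : {i : ι // a i = 0} ⊕ ({i : ι // 0 < a i} × {i : ι // a i < 0}) → Fin n → ℝ :=
      Sum.elim (fun z j => A z.1 j.castSucc)
        (fun pq j => (-a pq.2.1) * A pq.1.1 j.castSucc + a pq.1.1 * A pq.2.1 j.castSucc)
    let b' : {i : ι // a i = 0} ⊕ ({i : ι // 0 < a i} × {i : ι // a i < 0}) → ℝ :=
      Sum.elim (fun z => b z.1) (fun pq => (-a pq.2.1) * b pq.1.1 + a pq.1.1 * b pq.2.1)
    have hinf' : ¬ ∃ x : Fin n → ℝ, ∀ i', (∑ j, A' i' j * x j) ≤ b' i' := by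
      rintro ⟨x', hx'⟩
      apply hinf
      set S : ι → ℝ := fun i => ∑ j : Fin n, A i j.castSucc * x' j with hS
      have key : ∀ (p : {i : ι // 0 < a i}) (q : {i : ι // a i < 0}),
          (S q.1 - b q.1) / (-a q.1) ≤ (b p.1 - S p.1) / a p.1 := by
        intro p q
        have h1 := hx' (.inr (p, q))
        simp only [A', b', Sum.elim_inr] at h1
        have h2 : (∑ j, ((-a q.1) * A p.1 j.castSucc + a p.1 * A q.1 j.castSucc) * x' j)
            = (-a q.1) * S p.1 + a p.1 * S q.1 := by
          rw [hS]; rw [Finset.mul_sum, Finset.mul_sum, ← Finset.sum_add_distrib]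
          congr 1; ext j; ring
        rw [h2] at h1
        rw [div_le_div_iff₀ (by linarith [q.2]) p.2]
        nlinarith [p.2, q.2]
      obtain ⟨t, Hpos, Hneg⟩ : ∃ t : ℝ, (∀ p : {i : ι // 0 < a i}, t ≤ (b p.1 - S p.1) / a p.1) ∧
          (∀ q : {i : ι // a i < 0}, (S q.1 - b q.1) / (-a q.1) ≤ t) := by
        by_cases hP : Nonempty {i : ι // 0 < a i}
        · exact ⟨Finset.univ.inf' Finset.univ_nonempty (fun p => (b p.1 - S p.1) / a p.1),
            fun p => Finset.inf'_le _ (Finset.mem_univ p),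
            fun q => Finset.le_inf' _ _ fun p _ => key p q⟩
        · by_cases hN : Nonempty {i : ι // a i < 0}
          · refine ⟨Finset.univ.sup'
              (Finset.univ_nonempty (α := {i : ι // a i < 0}))
              (fun q => (S q.1 - b q.1) / (-a q.1)),
              fun p => absurd ⟨p⟩ hP, fun q => Finset.le_sup'
                (f := fun q : {i : ι // a i < 0} => (S q.1 - b q.1) / (-a q.1))
                (Finset.mem_univ q)⟩
          · exact ⟨0, fun p => absurd ⟨p⟩ hP, fun q => absurd ⟨q⟩ hN⟩
      refine ⟨Fin.snoc x' t, fun i => ?_⟩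
      have hsum : (∑ j : Fin (n+1), A i j * (Fin.snoc x' t : Fin (n+1) → ℝ) j) = S i + a i * t := by
        rw [Fin.sum_univ_castSucc]
        simp [hS, ha]
      rw [hsum]
      rcases lt_trichotomy (a i) 0 with h | h | h
      · have := Hneg ⟨i, h⟩
        rw [div_le_iff₀ (by linarith)] at this
        simp only at this
        nlinarith
      · have h1 := hx' (.inl ⟨i, h⟩)
        simp only [A', b', Sum.elim_inl, ← hS] at h1
        rw [h]; simpa using h1
      · have := Hpos ⟨i, h⟩
        rw [le_div_iff₀ h] at this
        simp only at this
        nlinarith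
    obtain ⟨y', hy'0, hy'A, hy'b⟩ := ih A' b' hinf'
    let coeff : ({i : ι // a i = 0} ⊕ ({i : ι // 0 < a i} × {i : ι // a i < 0})) → ι → ℝ :=
      Sum.elim (fun z i => if i = z.1 then 1 else 0)
        (fun pq i => (if i = pq.1.1 then -a pq.2.1 else 0) + (if i = pq.2.1 then a pq.1.1 else 0))
    have hcoeff0 : ∀ i' i, 0 ≤ coeff i' i := by
      rintro (z | pq) i <;> simp only [coeff, Sum.elim_inl, Sum.elim_inr]
      · split_ifs <;> norm_num
      · have h1 := pq.1.2; have h2 := pq.2.2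
        split_ifs <;> linarith
    have hrow : ∀ i' (v : ι → ℝ), (∑ i, coeff i' i * v i) =
        Sum.elim (fun z : {i : ι // a i = 0} => v z.1)
          (fun pq : {i : ι // 0 < a i} × {i : ι // a i < 0} =>
            (-a pq.2.1) * v pq.1.1 + a pq.1.1 * v pq.2.1) i' := by
      rintro (z | pq) v <;> simp only [coeff, Sum.elim_inl, Sum.elim_inr]
      · rw [sum_ite_mul]; ring
      · simp only [add_mul, Finset.sum_add_distrib, sum_ite_mul]
    have swap : ∀ (v : ι → ℝ), (∑ i, (∑ i', y' i' * coeff i' i) * v i)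
        = ∑ i', y' i' * ∑ i, coeff i' i * v i := by
      intro v
      simp only [Finset.sum_mul, Finset.mul_sum]
      rw [Finset.sum_comm]
      congr 1; ext i'; congr 1; ext i; ring
    refine ⟨fun i => ∑ i', y' i' * coeff i' i, fun i => Finset.sum_nonneg fun i' _ =>
      mul_nonneg (hy'0 i') (hcoeff0 i' i), ?_, ?_⟩
    · intro j
      rw [swap]
      induction j using Fin.lastCases with
      | last =>
        apply Finset.sum_eq_zero
        rintro (z | pq) _ <;> rw [hrow]
        · simp only [Sum.elim_inl]
          exact mul_eq_zero_of_right _ z.2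
        · simp only [Sum.elim_inr]
          refine mul_eq_zero_of_right _ ?_
          show -a pq.2.1 * a pq.1.1 + a pq.1.1 * a pq.2.1 = 0
          ring
      | cast j =>
        have inner : ∀ i', (∑ i, coeff i' i * A i j.castSucc) = A' i' j := by
          rintro (z | pq) <;> rw [hrow] <;> simp only [A', Sum.elim_inl, Sum.elim_inr]
        calc (∑ i', y' i' * ∑ i, coeff i' i * A i j.castSucc)
            = ∑ i', y' i' * A' i' j := by
              apply Finset.sum_congr rfl; intro i' _; rw [inner]
          _ = 0 := hy'A j
    · rw [swap]
      have : ∀ i', y' i' * (∑ i, coeff i' i * b i) = y' i' * b' i' := by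
        rintro (z | pq) <;> rw [hrow] <;> simp only [b', Sum.elim_inl, Sum.elim_inr]
      rw [Finset.sum_congr rfl fun i' _ => this i']
      exact hy'b

private lemma dot_lin {β : Type*} [Fintype β] (a x y : β → ℝ) (t : ℝ) :
    (∑ j, a j * (x j + t * (y j - x j))) = (∑ j, a j * x j)
      + t * ((∑ j, a j * y j) - (∑ j, a j * x j)) := by
  rw [mul_sub, Finset.mul_sum, Finset.mul_sum, ← Finset.sum_sub_distrib, ← Finset.sum_add_distrib]
  congr 1; ext j; ring

private theorem indep_rows_minor : ∀ (r : ℕ) {β : Type} [Fintype β] [DecidableEq β]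
    (v : Fin r → β → ℝ), LinearIndependent ℝ v →
    ∃ g : Fin r → β, Function.Injective g ∧ (Matrix.of fun i j => v i (g j)).det ≠ 0 := by
  intro r
  induction r with
  | zero =>
    intro β _ _ v _
    exact ⟨Fin.elim0, Function.injective_of_subsingleton _, by simp [Matrix.det_fin_zero]⟩
  | succ r ih =>
    intro β _ _ v hv
    have hv' : v = Fin.cons (v 0) (fun i : Fin r => v i.succ) := by
      funext i; exact (Fin.cons_self_tail v).symm ▸ rfl
    rw [hv', linearIndependent_fin_cons] at hv
    obtain ⟨htail, hnotin⟩ := hv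
    obtain ⟨g, hginj, hgdet⟩ := ih _ htail
    set Q : Matrix (Fin r) (Fin r) ℝ := Matrix.of fun i j => v i.succ (g j) with hQ
    -- coefficients expressing v 0 on the g-columns through the rows of Q
    set c : Fin r → ℝ := Matrix.vecMul (fun j => v 0 (g j)) Q⁻¹ with hc
    have hQunit : IsUnit Q.det := (Ne.isUnit hgdet)
    have hcQ : Matrix.vecMul c Q = fun j => v 0 (g j) := by
      rw [hc, Matrix.vecMul_vecMul, Matrix.nonsing_inv_mul Q hQunit, Matrix.vecMul_one]
    set w : β → ℝ := fun x => v 0 x - ∑ i : Fin r, c i * v i.succ x with hw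
    have hwg : ∀ j, w (g j) = 0 := by
      intro j
      have := congrFun hcQ j
      simp only [Matrix.vecMul, dotProduct, hQ, Matrix.of_apply] at this
      simp [hw, this]
    have hwne : w ≠ 0 := by
      intro h0
      apply hnotin
      have : v 0 = ∑ i : Fin r, c i • v i.succ := by
        funext x
        have := congrFun h0 x
        simp only [hw, Pi.zero_apply] at this
        simp only [Finset.sum_apply, Pi.smul_apply, smul_eq_mul]
        linarith
      rw [this]
      exact Submodule.sum_mem _ fun i _ => Submodule.smul_mem _ _
        (Submodule.subset_span (Set.mem_range_self i))
    obtain ⟨j0, hj0⟩ : ∃ j0, w j0 ≠ 0 := by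
      by_contra h
      push_neg at h
      exact hwne (funext h)
    have hj0g : ∀ j, g j ≠ j0 := fun j h => hj0 (h ▸ hwg j)
    refine ⟨Fin.cases j0 g, ?_, ?_⟩
    · intro x y hxy
      induction x using Fin.cases with
      | zero => induction y using Fin.cases with
        | zero => rfl
        | succ y => simp at hxy; exact absurd hxy.symm (hj0g y)
      | succ x => induction y using Fin.cases with
        | zero => simp at hxy; exact absurd hxy (hj0g x)
        | succ y => simp at hxy; exact congrArg Fin.succ (hginj hxy)
    · -- determinant computation
      set N : Matrix (Fin (r+1)) (Fin (r+1)) ℝ :=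
        Matrix.of fun i j => v i ((Fin.cases j0 g : Fin (r+1) → β) j) with hN
      show N.det ≠ 0
      set N' : Matrix (Fin (r+1)) (Fin (r+1)) ℝ :=
        N.updateRow 0 (fun j => w ((Fin.cases j0 g : Fin (r+1) → β) j)) with hN'
      have hdetN : N.det = N'.det := by
        have hrow0 : N 0 = (fun j => w ((Fin.cases j0 g : Fin (r+1) → β) j)) +
            ∑ i : Fin r, c i • N i.succ := by
          funext j
          simp only [hN, hw, Matrix.of_apply, Pi.add_apply, Finset.sum_apply, Pi.smul_apply,
            smul_eq_mul]
          ring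
        conv_lhs => rw [← Matrix.updateRow_eq_self N 0, hrow0]
        rw [Matrix.det_updateRow_add]
        have hconv : (∑ i : Fin r, c i • N i.succ)
            = ∑ k : Fin (r+1), (Fin.cases 0 c : Fin (r+1) → ℝ) k • N k := by
          rw [Fin.sum_univ_succ]
          simp
        have : (N.updateRow 0 (∑ i : Fin r, c i • N i.succ)).det = 0 := by
          rw [hconv, Matrix.det_updateRow_sum]
          simp
        rw [this, add_zero, hN']
      rw [hdetN]
      have hexp := Matrix.det_succ_row_zero N'
      have hterm : ∀ j : Fin (r+1), j ≠ 0 → (-1 : ℝ) ^ (j : ℕ) * N' 0 j *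
          (N'.submatrix Fin.succ j.succAbove).det = 0 := by
        intro j hj
        obtain ⟨k, rfl⟩ := Fin.exists_succ_eq.mpr hj
        have : N' 0 k.succ = 0 := by
          simp only [hN', Matrix.updateRow_self]
          simpa using hwg k
        rw [this, mul_zero, zero_mul]
      rw [hexp, Finset.sum_eq_single 0 (fun j _ hj => hterm j hj) (by simp)]
      have h0 : N' 0 0 = w j0 := by simp [hN', Matrix.updateRow_self]
      have hsub : N'.submatrix Fin.succ (Fin.succAbove 0) = Q := by
        ext i k
        simp only [Matrix.submatrix_apply, hN']
        rw [Matrix.updateRow_ne (Fin.succ_ne_zero i)]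
        have hsa : (0 : Fin (r+1)).succAbove k = k.succ := rfl
        rw [hsa]
        simp [hN, hQ]
      rw [h0, hsub]
      simp only [Fin.val_zero, pow_zero, one_mul]
      exact mul_ne_zero hj0 hgdet

private theorem tu_eq_integer_solution {α : Type} [Fintype α] [DecidableEq α] {p : ℕ}
    (M : Matrix α (Fin p) ℝ) (hM : M.IsTotallyUnimodular) (d : α → ℤ)
    (hsol : ∃ x : Fin p → ℝ, ∀ i, (∑ j, M i j * x j) = (d i : ℝ)) :
    ∃ z : Fin p → ℤ, ∀ i, (∑ j, M i j * (z j : ℝ)) = (d i : ℝ) := by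
  classical
  obtain ⟨xh, hxh⟩ := hsol
  set P : ℕ → Prop := fun k => ∃ f : Fin k → α, ∃ g : Fin k → Fin p,
    Function.Injective f ∧ Function.Injective g ∧ (M.submatrix f g).det ≠ 0 with hP
  have hP0 : P 0 := ⟨Fin.elim0, Fin.elim0, Function.injective_of_subsingleton _,
    Function.injective_of_subsingleton _, by simp [Matrix.det_fin_zero]⟩
  have hPbound : ∀ k, P k → k ≤ Fintype.card α := by
    rintro k ⟨f, g, hf, hg, _⟩
    simpa using Fintype.card_le_of_injective f hf
  set k := Nat.findGreatest P (Fintype.card α) with hk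
  have hPk : P k := Nat.findGreatest_spec (Nat.zero_le _) hP0
  obtain ⟨f, g, hf, hg, hBdet⟩ := hPk
  set B : Matrix (Fin k) (Fin k) ℝ := M.submatrix f g with hB
  -- every row of M is in the span of the rows selected by f
  have claimC : ∀ (i : α) (u : Fin p → ℝ), (∀ r, (∑ j, M (f r) j * u j) = 0) →
      (∑ j, M i j * u j) = 0 := by
    intro i u hu
    by_contra hne
    have hinotin : i ∉ Set.range f := by
      rintro ⟨r, rfl⟩
      exact hne (hu r)
    -- the rows (M i, M ∘ f) are linearly independent
    have hindep : LinearIndependent ℝ (Fin.cons (M i) (fun r => M (f r)) :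
        Fin (k+1) → Fin p → ℝ) := by
      rw [linearIndependent_fin_cons]
      constructor
      · rw [Fintype.linearIndependent_iff]
        intro cc hcc
        have hvm : Matrix.vecMul cc B = 0 := by
          funext j
          have := congrFun hcc (g j)
          simp only [Finset.sum_apply, Pi.smul_apply, smul_eq_mul, Pi.zero_apply] at this
          simpa [Matrix.vecMul, dotProduct, hB] using this
        by_contra hccne
        push_neg at hccne
        obtain ⟨r, hr⟩ := hccne
        have : ∃ v, v ≠ 0 ∧ Matrix.vecMul v B = 0 := ⟨cc, fun h => hr (congrFun h r), hvm⟩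
        exact hBdet (Matrix.exists_vecMul_eq_zero_iff.mp this)
      · intro hin
        -- the functional pairing with u vanishes on the span but not on M i
        have hphi : ∀ w ∈ Submodule.span ℝ (Set.range (fun r => M (f r))),
            (∑ j, w j * u j) = 0 := by
          intro w hw
          induction hw using Submodule.span_induction with
          | mem w hw => obtain ⟨r, rfl⟩ := hw; exact hu r
          | zero => simp
          | add w₁ w₂ _ _ h1 h2 =>
            simp only [Pi.add_apply, add_mul, Finset.sum_add_distrib, h1, h2, add_zero]
          | smul a w _ h1 =>
            simp only [Pi.smul_apply, smul_eq_mul, mul_assoc, ← Finset.mul_sum, h1, mul_zero]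
        exact hne (hphi _ hin)
    obtain ⟨g', hg', hdet'⟩ := indep_rows_minor (k+1) _ hindep
    have hf' : Function.Injective (Fin.cons i f : Fin (k+1) → α) := by
      intro x y hxy
      induction x using Fin.cases with
      | zero => induction y using Fin.cases with
        | zero => rfl
        | succ y => simp at hxy; exact absurd ⟨y, hxy.symm⟩ hinotin
      | succ x => induction y using Fin.cases with
        | zero => simp at hxy; exact absurd ⟨x, hxy⟩ hinotin
        | succ y => simp at hxy; exact congrArg Fin.succ (hf hxy)
    have heq : (Matrix.of fun a b => (Fin.cons (M i) (fun r => M (f r)) :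
        Fin (k+1) → Fin p → ℝ) a (g' b)) = M.submatrix (Fin.cons i f) g' := by
      ext a b
      induction a using Fin.cases with
      | zero => simp
      | succ a => simp
    have hPk1 : P (k+1) := ⟨Fin.cons i f, g', hf', hg', by rwa [← heq]⟩
    exact Nat.findGreatest_is_greatest (lt_add_one k) (hPbound _ hPk1) hPk1
  -- integer version of B
  have hBent : ∀ r r', ∃ zz : ℤ, (zz : ℝ) = B r r' := by
    intro r r'
    obtain ⟨s, hs⟩ := hM.apply (f r) (g r')
    have hBr : B r r' = M (f r) (g r') := rfl
    exact ⟨(s : ℤ), by rw [hBr, ← hs]; cases s <;> simp⟩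
  choose B₀ hB₀ using hBent
  have hBmap : B = (Matrix.of B₀).map (Int.cast : ℤ → ℝ) := by
    ext r r'
    simp [← hB₀ r r']
  have hdetmap : B.det = ((Matrix.of B₀).det : ℝ) := by
    rw [hBmap]
    rw [show (of B₀).map (Int.cast : ℤ → ℝ) = (Int.castRingHom ℝ).mapMatrix (of B₀) from rfl]
    rw [← RingHom.map_det]
    rfl
  have hdet0 : (Matrix.of B₀).det = 1 ∨ (Matrix.of B₀).det = -1 := by
    obtain ⟨s, hs⟩ := hM k f g hf hg
    rw [← hB] at hs
    rcases s with _ | _ | _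
    · exfalso; apply hBdet; rw [← hs]; simp
    · right
      have : B.det = -1 := by rw [← hs]; simp
      rw [hdetmap] at this
      exact_mod_cast this
    · left
      have : B.det = 1 := by rw [← hs]; simp
      rw [hdetmap] at this
      exact_mod_cast this
  -- integer solution of the basic system
  set df : Fin k → ℤ := fun r => d (f r) with hdf
  set z₀ : Fin k → ℤ := (Matrix.of B₀).det • ((Matrix.of B₀).adjugate *ᵥ df) with hz₀
  have hB₀z : (Matrix.of B₀) *ᵥ z₀ = df := by
    rw [hz₀, Matrix.mulVec_smul, Matrix.mulVec_mulVec, Matrix.mul_adjugate]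
    funext r
    rcases hdet0 with h | h <;>
      simp [h, Matrix.smul_mulVec, Matrix.neg_mulVec, Matrix.one_mulVec]
  set z : Fin p → ℤ := fun j => if h : ∃ r, g r = j then z₀ h.choose else 0 with hzdef
  have hzg : ∀ r, z (g r) = z₀ r := by
    intro r
    have hex : ∃ r', g r' = g r := ⟨r, rfl⟩
    have hch : hex.choose = r := hg hex.choose_spec
    show (if h : ∃ r', g r' = g r then z₀ h.choose else 0) = z₀ r
    rw [dif_pos hex]
    exact congrArg z₀ hch
  have hzoff : ∀ j, j ∉ Finset.univ.image g → z j = 0 := by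
    intro j hj
    show (if h : ∃ r, g r = j then z₀ h.choose else 0) = 0
    rw [dif_neg]
    rintro ⟨r, rfl⟩
    exact hj (Finset.mem_image_of_mem g (Finset.mem_univ r))
  have hfrows : ∀ r, (∑ j, M (f r) j * (z j : ℝ)) = (d (f r) : ℝ) := by
    intro r
    have hsplit : (∑ j, M (f r) j * (z j : ℝ))
        = ∑ j ∈ Finset.univ.image g, M (f r) j * (z j : ℝ) := by
      symm
      apply Finset.sum_subset (Finset.subset_univ _)
      intro j _ hj
      rw [hzoff j hj]
      simp
    rw [hsplit, Finset.sum_image (fun a _ b _ h => hg h)]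
    have : ∀ r', M (f r) (g r') * (z (g r') : ℝ) = ((B₀ r r' * z₀ r' : ℤ) : ℝ) := by
      intro r'
      rw [hzg r']
      push_cast
      rw [hB₀ r r']
      rfl
    rw [Finset.sum_congr rfl fun r' _ => this r', ← Int.cast_sum]
    have := congrFun hB₀z r
    simp only [Matrix.mulVec, dotProduct, Matrix.of_apply] at this
    rw [this]
  refine ⟨z, fun i => ?_⟩
  have hzero : (∑ j, M i j * ((z j : ℝ) - xh j)) = 0 := by
    apply claimC
    intro r
    simp only [mul_sub, Finset.sum_sub_distrib]
    rw [hfrows r, hxh (f r)]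
    ring
  simp only [mul_sub, Finset.sum_sub_distrib] at hzero
  have := hxh i
  linarith

private theorem tu_lp_integer_opt {ι : Type} [Fintype ι] [DecidableEq ι] {p : ℕ}
    (M : Matrix ι (Fin p) ℝ) (hM : M.IsTotallyUnimodular) (d : ι → ℤ) (w : Fin p → ℝ)
    (xs : Fin p → ℝ) (hfeas : ∀ i, (∑ j, M i j * xs j) ≤ (d i : ℝ))
    (hopt : ∀ x : Fin p → ℝ, (∀ i, (∑ j, M i j * x j) ≤ (d i : ℝ)) →
      (∑ j, w j * x j) ≤ (∑ j, w j * xs j)) :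
    ∃ z : Fin p → ℤ, (∀ i, (∑ j, M i j * (z j : ℝ)) ≤ (d i : ℝ)) ∧
      (∑ j, w j * xs j) ≤ (∑ j, w j * (z j : ℝ)) := by
  classical
  set v : ℝ := ∑ j, w j * xs j with hv
  set SOpt : (Fin p → ℝ) → Prop :=
    fun x => (∀ i, (∑ j, M i j * x j) ≤ (d i : ℝ)) ∧ (∑ j, w j * x j) = v with hSOpt
  set good : Finset ι → Prop :=
    fun I => ∃ x, SOpt x ∧ ∀ i ∈ I, (∑ j, M i j * x j) = (d i : ℝ) with hgood
  have hgoodempty : good ∅ := ⟨xs, ⟨hfeas, rfl⟩, by simp⟩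
  obtain ⟨I, hI, hImax⟩ : ∃ I : Finset ι, good I ∧ ∀ I' : Finset ι, good I' →
      I'.card ≤ I.card := by
    obtain ⟨I, hIc, hImax⟩ := Finset.exists_max_image (Finset.univ.filter good)
      Finset.card ⟨∅, Finset.mem_filter.mpr ⟨Finset.mem_univ _, hgoodempty⟩⟩
    exact ⟨I, (Finset.mem_filter.mp hIc).2,
      fun I' hI' => hImax I' (Finset.mem_filter.mpr ⟨Finset.mem_univ _, hI'⟩)⟩
  obtain ⟨x0, hx0opt, hx0I⟩ := hI
  -- an optimal point tight on I and slack everywhere else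
  have hnogood : ∀ i, i ∉ I → ¬ good (insert i I) := by
    intro i hiI hgi
    have := hImax _ hgi
    rw [Finset.card_insert_of_notMem hiI] at this
    omega
  have hxi : ∀ t : {i : ι // i ∉ I}, ∃ x, SOpt x ∧ (∀ i ∈ I, (∑ j, M i j * x j) = (d i : ℝ)) ∧
      (∑ j, M t.1 j * x j) < (d t.1 : ℝ) := by
    rintro ⟨i, hiI⟩
    by_contra hcon
    push_neg at hcon
    apply hnogood i hiI
    refine ⟨x0, hx0opt, fun i' hi' => ?_⟩
    rcases Finset.mem_insert.mp hi' with rfl | hi'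
    · exact le_antisymm (hx0opt.1 i') (hcon x0 hx0opt hx0I)
    · exact hx0I i' hi'
  choose xi hxiopt hxiI hxistrict using hxi
  obtain ⟨xbar, hbaropt, hbarI, hbarstrict⟩ : ∃ xbar, SOpt xbar ∧
      (∀ i ∈ I, (∑ j, M i j * xbar j) = (d i : ℝ)) ∧
      (∀ i, i ∉ I → (∑ j, M i j * xbar j) < (d i : ℝ)) := by
    by_cases hT : Nonempty {i : ι // i ∉ I}
    · set C : ℝ := (Fintype.card {i : ι // i ∉ I} : ℝ) with hC
      have hCpos : 0 < C := by
        rw [hC]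
        exact_mod_cast Fintype.card_pos
      refine ⟨fun j => C⁻¹ * ∑ t : {i : ι // i ∉ I}, xi t j, ⟨?_, ?_⟩, ?_, ?_⟩
      all_goals
        have havg : ∀ a : Fin p → ℝ, (∑ j, a j * (C⁻¹ * ∑ t : {i : ι // i ∉ I}, xi t j))
            = C⁻¹ * ∑ t : {i : ι // i ∉ I}, (∑ j, a j * xi t j) := by
          intro a
          have h1 : ∀ j : Fin p, a j * (C⁻¹ * ∑ t : {i : ι // i ∉ I}, xi t j)
              = ∑ t : {i : ι // i ∉ I}, C⁻¹ * (a j * xi t j) := by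
            intro j
            rw [Finset.mul_sum, Finset.mul_sum]
            congr 1; ext t
            ring
          rw [Finset.sum_congr rfl fun j _ => h1 j, Finset.sum_comm, Finset.mul_sum]
          congr 1; ext t
          rw [Finset.mul_sum]
      · intro i
        rw [havg]
        rw [inv_mul_le_iff₀ hCpos]
        have : (∑ t : {i : ι // i ∉ I}, (∑ j, M i j * xi t j))
            ≤ ∑ _t : {i : ι // i ∉ I}, (d i : ℝ) :=
          Finset.sum_le_sum fun t _ => (hxiopt t).1 i
        simpa [hC, mul_comm] using this
      · rw [havg]
        have : (∑ t : {i : ι // i ∉ I}, (∑ j, w j * xi t j))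
            = ∑ _t : {i : ι // i ∉ I}, v :=
          Finset.sum_congr rfl fun t _ => (hxiopt t).2
        rw [this, Finset.sum_const, Finset.card_univ, nsmul_eq_mul, ← hC,
          inv_mul_cancel_left₀ (ne_of_gt hCpos)]
      · intro i hi
        rw [havg]
        have : (∑ t : {i : ι // i ∉ I}, (∑ j, M i j * xi t j))
            = ∑ _t : {i : ι // i ∉ I}, (d i : ℝ) :=
          Finset.sum_congr rfl fun t _ => hxiI t i hi
        rw [this, Finset.sum_const, Finset.card_univ, nsmul_eq_mul, ← hC,
          inv_mul_cancel_left₀ (ne_of_gt hCpos)]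
      · intro i hi
        rw [havg]
        rw [inv_mul_lt_iff₀ hCpos]
        have : (∑ t : {i : ι // i ∉ I}, (∑ j, M i j * xi t j))
            < ∑ _t : {i : ι // i ∉ I}, (d i : ℝ) := by
          apply Finset.sum_lt_sum (fun t _ => (hxiopt t).1 i)
          exact ⟨⟨i, hi⟩, Finset.mem_univ _, hxistrict ⟨i, hi⟩⟩
        simpa [hC, mul_comm] using this
    · refine ⟨x0, hx0opt, hx0I, fun i hi => absurd ⟨⟨i, hi⟩⟩ hT⟩
  -- every point satisfying the equalities on I is optimal and feasible
  have hface : ∀ zR : Fin p → ℝ, (∀ i ∈ I, (∑ j, M i j * zR j) = (d i : ℝ)) → SOpt zR := by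
    intro z hz
    set δ : ι → ℝ := fun i => (d i : ℝ) - ∑ j, M i j * xbar j with hδ
    set γ : ι → ℝ := fun i => (∑ j, M i j * z j) - (∑ j, M i j * xbar j) with hγ
    have hγI : ∀ i ∈ I, γ i = 0 := by
      intro i hi
      rw [hγ]
      simp only
      rw [hz i hi, hbarI i hi, sub_self]
    have hδpos : ∀ i, i ∉ I → 0 < δ i := fun i hi => by
      rw [hδ]; simp only; linarith [hbarstrict i hi]
    obtain ⟨ε, hε0, hεb⟩ : ∃ ε : ℝ, 0 < ε ∧ ∀ i, i ∉ I → ε * |γ i| ≤ δ i := by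
      by_cases hne : (Iᶜ : Finset ι).Nonempty
      · set e : ℝ := min 1 ((Iᶜ : Finset ι).inf' hne (fun i => δ i / (|γ i| + 1))) with he
        have he0 : 0 < e := by
          apply lt_min one_pos
          rw [Finset.lt_inf'_iff]
          intro i hi
          have := hδpos i (Finset.mem_compl.mp hi)
          positivity
        refine ⟨e, he0, ?_⟩
        intro i hi
        have h1 : e ≤ δ i / (|γ i| + 1) :=
          le_trans (min_le_right _ _) (Finset.inf'_le _ (Finset.mem_compl.mpr hi))
        have h2 : (0:ℝ) < |γ i| + 1 := by positivity
        have h3 : e * (|γ i| + 1) ≤ δ i := by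
          rw [← le_div_iff₀ h2]
          exact h1
        nlinarith [abs_nonneg (γ i)]
      · refine ⟨1, one_pos, fun i hi => absurd (Finset.mem_compl.mpr hi) ?_⟩
        rw [Finset.not_nonempty_iff_eq_empty] at hne
        simp [hne]
    have hfeaspm : ∀ s : ℝ, |s| ≤ ε → ∀ i, (∑ j, M i j * (xbar j + s * (z j - xbar j)))
        ≤ (d i : ℝ) := by
      intro s hs i
      rw [dot_lin]
      by_cases hi : i ∈ I
      · have := hγI i hi
        rw [hγ] at this
        simp only at this
        rw [show (∑ j, M i j * z j) - (∑ j, M i j * xbar j) = γ i from rfl, hγI i hi, mul_zero,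
          add_zero, hbarI i hi]
      · have h1 := hεb i hi
        have h2 : s * ((∑ j, M i j * z j) - (∑ j, M i j * xbar j)) ≤ ε * |γ i| := by
          calc s * ((∑ j, M i j * z j) - (∑ j, M i j * xbar j)) ≤ |s * γ i| := le_abs_self _
            _ = |s| * |γ i| := abs_mul _ _
            _ ≤ ε * |γ i| := by
              apply mul_le_mul_of_nonneg_right hs (abs_nonneg _)
        have h3 := hδpos i hi
        have hδi : δ i = (d i : ℝ) - ∑ j, M i j * xbar j := rfl
        have hγi : γ i = (∑ j, M i j * z j) - (∑ j, M i j * xbar j) := rfl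
        linarith
    have hWzero : (∑ j, w j * z j) = v := by
      have hplus := hopt _ (hfeaspm ε (by rw [abs_of_pos hε0]) )
      have hminus := hopt _ (hfeaspm (-ε) (by rw [abs_neg, abs_of_pos hε0]))
      rw [dot_lin] at hplus hminus
      rw [hbaropt.2] at hplus hminus
      have hW : ε * ((∑ j, w j * z j) - v) = 0 := le_antisymm (by linarith) (by nlinarith)
      rcases mul_eq_zero.mp hW with h | h
      · exact absurd h (ne_of_gt hε0)
      · linarith
    refine ⟨?_, hWzero⟩
    -- feasibility of z
    by_contra hinfeas
    push_neg at hinfeas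
    obtain ⟨i₁, hi₁⟩ := hinfeas
    set J : Finset ι := Finset.univ.filter (fun i => (d i : ℝ) < ∑ j, M i j * z j) with hJ
    have hJne : J.Nonempty := ⟨i₁, Finset.mem_filter.mpr ⟨Finset.mem_univ _, hi₁⟩⟩
    have hJI : ∀ i ∈ J, i ∉ I := by
      intro i hiJ hiI
      have := (Finset.mem_filter.mp hiJ).2
      rw [hz i hiI] at this
      exact lt_irrefl _ this
    have hγJ : ∀ i ∈ J, 0 < γ i := by
      intro i hiJ
      have h1 := (Finset.mem_filter.mp hiJ).2
      have h2 := hbaropt.1 i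
      rw [hγ]
      simp only
      linarith
    set ts : ℝ := J.inf' hJne (fun i => δ i / γ i) with hts
    have hts0 : 0 < ts := by
      rw [hts, Finset.lt_inf'_iff]
      intro i hiJ
      exact div_pos (hδpos i (hJI i hiJ)) (hγJ i hiJ)
    have hts1 : ∀ i ∈ J, δ i < γ i := by
      intro i hiJ
      have h1 := (Finset.mem_filter.mp hiJ).2
      rw [hδ, hγ]
      simp only
      linarith
    have htslt : ts < 1 := by
      rcases hJne with ⟨i₂, hi₂⟩
      calc ts ≤ δ i₂ / γ i₂ := Finset.inf'_le _ hi₂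
        _ < 1 := by
          rw [div_lt_one (hγJ i₂ hi₂)]
          exact hts1 i₂ hi₂
    obtain ⟨i0, hi0J, hi0eq⟩ := Finset.exists_mem_eq_inf' hJne (fun i => δ i / γ i)
    apply hnogood i0 (hJI i0 hi0J)
    refine ⟨fun j => xbar j + ts * (z j - xbar j), ⟨?_, ?_⟩, ?_⟩
    · -- feasibility
      intro i
      rw [dot_lin]
      rw [show (∑ j, M i j * z j) - (∑ j, M i j * xbar j) = γ i from rfl]
      by_cases hiJ : i ∈ J
      · have h1 : ts ≤ δ i / γ i := Finset.inf'_le _ hiJ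
        have h2 : ts * γ i ≤ δ i := by
          rw [← le_div_iff₀ (hγJ i hiJ)]
          exact h1
        have h3 : δ i = (d i : ℝ) - ∑ j, M i j * xbar j := rfl
        linarith
      · have h1 : (∑ j, M i j * z j) ≤ (d i : ℝ) := by
          by_contra hcon
          push_neg at hcon
          exact hiJ (Finset.mem_filter.mpr ⟨Finset.mem_univ _, hcon⟩)
        have h2 := hbaropt.1 i
        have h3 : γ i = (∑ j, M i j * z j) - (∑ j, M i j * xbar j) := rfl
        nlinarith
    · -- objective value
      rw [dot_lin, hbaropt.2, hWzero]
      ring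
    · -- equalities on insert i0 I
      intro i hi
      rw [dot_lin]
      rw [show (∑ j, M i j * z j) - (∑ j, M i j * xbar j) = γ i from rfl]
      rcases Finset.mem_insert.mp hi with rfl | hiI
      · rw [hts, hi0eq]
        rw [div_mul_cancel₀ _ (ne_of_gt (hγJ i hi0J))]
        have h3 : δ i = (d i : ℝ) - ∑ j, M i j * xbar j := rfl
        linarith
      · rw [hγI i hiI, mul_zero, add_zero]
        exact hbarI i hiI
  -- integer point on the optimal face
  obtain ⟨z, hzeq⟩ := tu_eq_integer_solution (M.submatrix (Subtype.val : {i : ι // i ∈ I} → ι) id)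
    (hM.submatrix _ _) (fun t => d t.1)
    ⟨xbar, fun t => by simpa using hbarI t.1 t.2⟩
  have hzopt : SOpt (fun j => (z j : ℝ)) := by
    apply hface
    intro i hi
    simpa using hzeq ⟨i, hi⟩
  exact ⟨z, hzopt.1, le_of_eq hzopt.2.symm⟩

private lemma tu_fromRows_neg {m n : Type} {A : Matrix m n ℝ} (hA : A.IsTotallyUnimodular) :
    (Matrix.fromRows A (-A)).IsTotallyUnimodular := by
  rw [Matrix.isTotallyUnimodular_iff]
  intro k f g
  set e : Fin k → ℝ := fun i => Sum.elim (fun _ => (1:ℝ)) (fun _ => (-1:ℝ)) (f i) with he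
  set f' : Fin k → m := fun i => Sum.elim id id (f i) with hf'
  have hsub : (Matrix.fromRows A (-A)).submatrix f g =
      Matrix.of (fun i j => e i * (A.submatrix f' g) i j) := by
    ext i j
    rcases hfi : f i with i' | i' <;>
      simp [he, hf', hfi, Matrix.fromRows_apply_inl, Matrix.fromRows_apply_inr, Matrix.submatrix_apply]
  rw [hsub, Matrix.det_mul_column]
  have hprod : (∏ i, e i) = 1 ∨ (∏ i, e i) = -1 := by
    apply Finset.prod_induction e (fun x => x = 1 ∨ x = -1)
    · rintro a b (rfl | rfl) (rfl | rfl) <;> norm_num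
    · norm_num
    · intro i _
      rcases hfi : f i with i' | i' <;> simp [he, hfi]
  obtain ⟨s, hs⟩ := (Matrix.isTotallyUnimodular_iff A).mp hA k f' g
  rcases hprod with h | h
  · exact ⟨s, by rw [h, one_mul, hs]⟩
  · refine ⟨-s, ?_⟩
    rw [h, ← hs]
    cases s <;> norm_num

-- weak duality
private lemma weak_duality {m n : ℕ} (A : Matrix (Fin m) (Fin n) ℝ) (b : Fin m → ℝ)
    (c : Fin n → ℝ) (x : Fin n → ℝ) (hx : ∀ i, (∑ j, A i j * x j) ≤ b i)
    (y : Fin m → ℝ) (hy0 : ∀ i, 0 ≤ y i) (hyA : ∀ j, (∑ i, A i j * y i) = c j) :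
    (∑ j, c j * x j) ≤ ∑ i, y i * b i := by
  have h1 : (∑ j, c j * x j) = ∑ i, y i * (∑ j, A i j * x j) := by
    have swap : (∑ i, y i * (∑ j, A i j * x j)) = ∑ j, (∑ i, A i j * y i) * x j := by
      simp only [Finset.mul_sum, Finset.sum_mul]
      rw [Finset.sum_comm]
      congr 1; ext i; congr 1; ext j; ring
    rw [swap]
    apply Finset.sum_congr rfl
    intro j _
    rw [hyA j]
  rw [h1]
  apply Finset.sum_le_sum
  intro i _
  exact mul_le_mul_of_nonneg_left (hx i) (hy0 i)

-- strong duality : existence of a dual optimal solution with value ≤ primal optimum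
private theorem dual_attain {m n : ℕ} (A : Matrix (Fin m) (Fin n) ℝ) (b : Fin m → ℝ)
    (c : Fin n → ℝ) (xstar : Fin n → ℝ) (hfeas : ∀ i, (∑ j, A i j * xstar j) ≤ b i)
    (hopt : ∀ x : Fin n → ℝ, (∀ i, (∑ j, A i j * x j) ≤ b i) →
      (∑ j, c j * x j) ≤ (∑ j, c j * xstar j)) :
    ∃ y : Fin m → ℝ, (∀ i, 0 ≤ y i) ∧ (∀ j, (∑ i, A i j * y i) = c j) ∧
      (∑ i, y i * b i) ≤ ∑ j, c j * xstar j := by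
  classical
  set v : ℝ := ∑ j, c j * xstar j with hv
  set R : (Fin m ⊕ ((Fin n ⊕ Fin n) ⊕ Unit)) → Fin m → ℝ :=
    Sum.elim (fun i k => if k = i then -1 else 0)
      (Sum.elim (Sum.elim (fun j k => A k j) (fun j k => -A k j)) (fun _ k => b k)) with hR
  set rhs : (Fin m ⊕ ((Fin n ⊕ Fin n) ⊕ Unit)) → ℝ :=
    Sum.elim (fun _ => 0) (Sum.elim (Sum.elim c (fun j => -c j)) (fun _ => v)) with hrhs
  by_contra hno
  push_neg at hno
  have hinf : ¬ ∃ y : Fin m → ℝ, ∀ i', (∑ k, R i' k * y k) ≤ rhs i' := by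
    rintro ⟨y, hy⟩
    have hy0 : ∀ i, 0 ≤ y i := by
      intro i
      have := hy (.inl i)
      simp only [hR, hrhs, Sum.elim_inl] at this
      rw [sum_ite_mul i (-1) y] at this
      linarith
    have hyle : ∀ j, (∑ k, A k j * y k) ≤ c j := by
      intro j
      have := hy (.inr (.inl (.inl j)))
      simpa [hR, hrhs] using this
    have hyge : ∀ j, -(∑ k, A k j * y k) ≤ -c j := by
      intro j
      have := hy (.inr (.inl (.inr j)))
      simp only [hR, hrhs, Sum.elim_inr, Sum.elim_inl] at this
      rw [show (∑ k, -A k j * y k) = -(∑ k, A k j * y k) by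
        rw [← Finset.sum_neg_distrib]; congr 1; ext k; ring] at this
      exact this
    have hyb : (∑ k, b k * y k) ≤ v := by
      have := hy (.inr (.inr ()))
      simpa [hR, hrhs] using this
    have hval := hno y hy0 (fun j => le_antisymm (hyle j) (by linarith [hyge j]))
    have hcb : (∑ i, y i * b i) = ∑ i, b i * y i := by
      congr 1; ext i; ring
    rw [hcb] at hval
    linarith
  obtain ⟨u, hu0, huR, hurhs⟩ := farkas m R rhs hinf
  set pp : Fin n → ℝ := fun j => u (.inr (.inl (.inl j))) with hpp
  set qq : Fin n → ℝ := fun j => u (.inr (.inl (.inr j))) with hqq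
  set lam : ℝ := u (.inr (.inr ())) with hlam
  set dd : Fin n → ℝ := fun j => qq j - pp j with hdd
  have hneg1 : ∀ k : Fin m, (∑ i : Fin m, u (.inl i) * if k = i then (-1:ℝ) else 0)
      = -u (.inl k) := by
    intro k
    have h : ∀ i : Fin m, (u (.inl i) * if k = i then (-1:ℝ) else 0)
        = (if i = k then -u (.inl i) else 0) := by
      intro i
      rcases eq_or_ne i k with rfl | hik
      · simp
      · simp [hik, Ne.symm hik]
    rw [Finset.sum_congr rfl fun i _ => h i,
      Finset.sum_ite_eq' Finset.univ k (fun i => -u (.inl i))]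
    simp
  have hrow : ∀ k, (∑ j, A k j * dd j) ≤ lam * b k := by
    intro k
    have hthis := huR k
    rw [Fintype.sum_sum_type, Fintype.sum_sum_type, Fintype.sum_sum_type] at hthis
    simp only [hR, Sum.elim_inl, Sum.elim_inr, Finset.univ_unique,
      Finset.sum_singleton] at hthis
    rw [hneg1 k] at hthis
    have h2 : (∑ j, A k j * dd j)
        = -((∑ j, u (.inr (.inl (.inl j))) * A k j)
            + ∑ j, u (.inr (.inl (.inr j))) * (-A k j)) := by
      rw [← Finset.sum_add_distrib, ← Finset.sum_neg_distrib]
      apply Finset.sum_congr rfl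
      intro j _
      simp only [hdd, hqq, hpp]
      ring
    have h3 := hu0 (.inl k)
    rw [h2]
    have hlam' : u (Sum.inr (Sum.inr PUnit.unit)) = lam := rfl
    rw [hlam'] at hthis
    linarith
  have hcd : lam * v < ∑ j, c j * dd j := by
    rw [Fintype.sum_sum_type, Fintype.sum_sum_type, Fintype.sum_sum_type] at hurhs
    simp only [hrhs, Sum.elim_inl, Sum.elim_inr, Finset.univ_unique, Finset.sum_singleton,
      mul_zero, Finset.sum_const_zero, zero_add] at hurhs
    have h2 : (∑ j, c j * dd j)
        = -((∑ j, u (.inr (.inl (.inl j))) * c j)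
            + ∑ j, u (.inr (.inl (.inr j))) * (-c j)) := by
      rw [← Finset.sum_add_distrib, ← Finset.sum_neg_distrib]
      apply Finset.sum_congr rfl
      intro j _
      simp only [hdd, hqq, hpp]
      ring
    have hlam' : u (Sum.inr (Sum.inr PUnit.unit)) = lam := rfl
    rw [hlam'] at hurhs
    rw [h2]
    linarith
  rcases eq_or_lt_of_le (hu0 (.inr (.inr ()))) with hlam0 | hlampos
  · -- lam = 0 : improving direction, contradiction with optimality
    have hlam0' : lam = 0 := hlam0.symm
    have hxfeas : ∀ k, (∑ j, A k j * (xstar j + dd j)) ≤ b k := by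
      intro k
      have h1 : (∑ j, A k j * (xstar j + dd j))
          = (∑ j, A k j * xstar j) + ∑ j, A k j * dd j := by
        rw [← Finset.sum_add_distrib]
        apply Finset.sum_congr rfl
        intro j _
        ring
      rw [h1]
      have := hrow k
      rw [hlam0', zero_mul] at this
      linarith [hfeas k]
    have hval := hopt _ hxfeas
    have h1 : (∑ j, c j * (xstar j + dd j))
        = (∑ j, c j * xstar j) + ∑ j, c j * dd j := by
      rw [← Finset.sum_add_distrib]
      apply Finset.sum_congr rfl
      intro j _
      ring
    rw [h1, ← hv] at hval
    rw [hlam0', zero_mul] at hcd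
    linarith
  · -- lam > 0 : a strictly better feasible point, contradiction
    have hxfeas : ∀ k, (∑ j, A k j * (dd j / lam)) ≤ b k := by
      intro k
      have h1 : (∑ j, A k j * (dd j / lam)) = (∑ j, A k j * dd j) / lam := by
        rw [Finset.sum_div]
        apply Finset.sum_congr rfl
        intro j _
        ring
      rw [h1, div_le_iff₀ hlampos]
      have := hrow k
      nlinarith
    have hval := hopt _ hxfeas
    have h1 : (∑ j, c j * (dd j / lam)) = (∑ j, c j * dd j) / lam := by
      rw [Finset.sum_div]
      apply Finset.sum_congr rfl
      intro j _
      ring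
    rw [h1] at hval
    rw [div_le_iff₀ hlampos] at hval
    nlinarith

/-- Hoffman–Kruskal integrality for LPs with totally unimodular constraint matrices:
if A is TU, b and c are integer vectors, and the primal max{cᵀx : Ax ≤ b} has a finite
attained optimum, then it has an integer optimal solution, and so does the dual
min{yᵀb : y ≥ 0, Aᵀy = c}. -/
theorem tu_lp_integer_optima {m n : ℕ} (A : Matrix (Fin m) (Fin n) ℝ)
    (hA : A.IsTotallyUnimodular) (b : Fin m → ℤ) (c : Fin n → ℤ)
    (hopt : ∃ xstar : Fin n → ℝ, (∀ i, (∑ j, A i j * xstar j) ≤ (b i : ℝ)) ∧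
      (∀ x : Fin n → ℝ, (∀ i, (∑ j, A i j * x j) ≤ (b i : ℝ)) →
        (∑ j, (c j : ℝ) * x j) ≤ (∑ j, (c j : ℝ) * xstar j))) :
    (∃ x : Fin n → ℤ, (∀ i, (∑ j, A i j * (x j : ℝ)) ≤ (b i : ℝ)) ∧
      (∀ x' : Fin n → ℝ, (∀ i, (∑ j, A i j * x' j) ≤ (b i : ℝ)) →
        (∑ j, (c j : ℝ) * x' j) ≤ (∑ j, (c j : ℝ) * (x j : ℝ)))) ∧
    (∃ y : Fin m → ℤ, (∀ i, 0 ≤ y i) ∧ (∀ j, (∑ i, A i j * (y i : ℝ)) = (c j : ℝ)) ∧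
      (∀ y' : Fin m → ℝ, (∀ i, 0 ≤ y' i) → (∀ j, (∑ i, A i j * y' i) = (c j : ℝ)) →
        (∑ i, (y i : ℝ) * (b i : ℝ)) ≤ (∑ i, y' i * (b i : ℝ)))) := by
  classical
  obtain ⟨xstar, hfeas, hoptim⟩ := hopt
  constructor
  · obtain ⟨z, hzfeas, hzval⟩ :=
      tu_lp_integer_opt A hA b (fun j => (c j : ℝ)) xstar hfeas hoptim
    exact ⟨z, hzfeas, fun x' hx' => le_trans (hoptim x' hx') hzval⟩
  · obtain ⟨ystar, hy0, hyA, hyb⟩ :=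
      dual_attain A (fun i => (b i : ℝ)) (fun j => (c j : ℝ)) xstar hfeas hoptim
    set D : Matrix ((Fin n ⊕ Fin n) ⊕ Fin m) (Fin m) ℝ :=
      Matrix.fromRows (Matrix.fromRows Aᵀ (-Aᵀ))
        (Matrix.of fun i k => if k = i then (-1:ℝ) else 0) with hD
    have hDTU : D.IsTotallyUnimodular := by
      apply Matrix.IsTotallyUnimodular.fromRows_unitlike (tu_fromRows_neg hA.transpose)
      intro _ i
      refine ⟨i, SignType.neg, funext fun k => ?_⟩
      simp [Pi.single_apply]
    set dvec : ((Fin n ⊕ Fin n) ⊕ Fin m) → ℤ :=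
      Sum.elim (Sum.elim c (fun j => -c j)) (fun _ => 0) with hdvec
    have hnegsum : ∀ (j : Fin n) (y : Fin m → ℝ),
        (∑ k, (-Aᵀ) j k * y k) = -(∑ k, A k j * y k) := by
      intro j y
      rw [← Finset.sum_neg_distrib]
      apply Finset.sum_congr rfl
      intro k _
      simp [Matrix.transpose_apply]
    have hyfeasD : ∀ i', (∑ k, D i' k * ystar k) ≤ ((dvec i' : ℤ) : ℝ) := by
      rintro ((j | j) | i)
      · simp only [hD, hdvec, Matrix.fromRows, Matrix.of_apply, Sum.elim_inl]
        exact le_of_eq (hyA j)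
      · simp only [hD, hdvec, Matrix.fromRows_apply_inl, Matrix.fromRows_apply_inr, Matrix.of_apply, Sum.elim_inl, Sum.elim_inr]
        rw [hnegsum j ystar, hyA j]
        push_cast
        exact le_rfl
      · simp only [hD, hdvec, Matrix.fromRows_apply_inr, Matrix.of_apply, Sum.elim_inr]
        rw [sum_ite_mul i (-1) ystar]
        push_cast
        linarith [hy0 i]
    have hfeasD_iff : ∀ y' : Fin m → ℝ, (∀ i', (∑ k, D i' k * y' k) ≤ ((dvec i' : ℤ) : ℝ)) →
        (∀ i, 0 ≤ y' i) ∧ (∀ j, (∑ i, A i j * y' i) = (c j : ℝ)) := by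
      intro y' hy'
      constructor
      · intro i
        have := hy' (.inr i)
        simp only [hD, hdvec, Matrix.fromRows_apply_inr, Matrix.of_apply, Sum.elim_inr] at this
        rw [sum_ite_mul i (-1) y'] at this
        push_cast at this
        linarith
      · intro j
        have h1 := hy' (.inl (.inl j))
        have h2 := hy' (.inl (.inr j))
        simp only [hD, hdvec, Matrix.fromRows_apply_inl, Matrix.fromRows_apply_inr, Matrix.of_apply, Sum.elim_inl,
          Sum.elim_inr] at h1 h2
        rw [hnegsum j y'] at h2
        push_cast at h2
        simp only [Matrix.transpose_apply] at h1
        linarith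
    have hyoptD : ∀ y' : Fin m → ℝ, (∀ i', (∑ k, D i' k * y' k) ≤ ((dvec i' : ℤ) : ℝ)) →
        (∑ k, (-(b k : ℝ)) * y' k) ≤ ∑ k, (-(b k : ℝ)) * ystar k := by
      intro y' hy'
      obtain ⟨hy'0, hy'A⟩ := hfeasD_iff y' hy'
      have hwd := weak_duality A (fun i => (b i : ℝ)) (fun j => (c j : ℝ)) xstar hfeas
        y' hy'0 hy'A
      have h1 : (∑ k, (-(b k : ℝ)) * y' k) = -(∑ k, y' k * (b k : ℝ)) := by
        rw [← Finset.sum_neg_distrib]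
        apply Finset.sum_congr rfl
        intro k _
        ring
      have h2 : (∑ k, (-(b k : ℝ)) * ystar k) = -(∑ k, ystar k * (b k : ℝ)) := by
        rw [← Finset.sum_neg_distrib]
        apply Finset.sum_congr rfl
        intro k _
        ring
      rw [h1, h2]
      have := le_trans hyb hwd
      linarith [le_trans hyb hwd]
    obtain ⟨y, hyD, hyval⟩ :=
      tu_lp_integer_opt D hDTU dvec (fun k => -(b k : ℝ)) ystar hyfeasD hyoptD
    obtain ⟨hyz0, hyzA⟩ := hfeasD_iff (fun k => (y k : ℝ)) hyD
    refine ⟨y, fun i => by exact_mod_cast hyz0 i, hyzA, ?_⟩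
    intro y' hy'0 hy'A
    have hwd := weak_duality A (fun i => (b i : ℝ)) (fun j => (c j : ℝ)) xstar hfeas
      y' hy'0 hy'A
    -- value of y is at most value of ystar which is at most v which is ≤ value of y'
    have h2 : (∑ k, (-(b k : ℝ)) * ystar k) ≤ ∑ k, (-(b k : ℝ)) * (y k : ℝ) := hyval
    have h3 : (∑ k, (-(b k : ℝ)) * ystar k) = -(∑ k, ystar k * (b k : ℝ)) := by
      rw [← Finset.sum_neg_distrib]
      apply Finset.sum_congr rfl
      intro k _
      ring
    have h4 : (∑ k, (-(b k : ℝ)) * (y k : ℝ)) = -(∑ k, (y k : ℝ) * (b k : ℝ)) := by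
      rw [← Finset.sum_neg_distrib]
      apply Finset.sum_congr rfl
      intro k _
      ring
    rw [h3, h4] at h2
    linarith
end
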